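/- arXiv:1308.5691 — 4 statements merged into one kernel-verified Lean document; each statement's English description precedes it below -/
import Mathlib

section
/- Let φ = (1+√5)/2 be the golden ratio. Every sequence α : ℕ → ℂ satisfying α(k+3) + φ⁻¹·α(k+2) − φ⁻¹·α(k+1) − α(k) = 0 for all k is periodic with period 5, i.e. α(k+5) = α(k) for all k. -/
/-- Any complex solution of the recurrence `α(k+3) + φ⁻¹α(k+2) − φ⁻¹α(k+1) − α(k) = 0`
(φ the golden ratio) is periodic of period 5. -/
theorem recurrence_period_five (α : ℕ → ℂ)
    (h : ∀ k : ℕ,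
      α (k + 3) + ((((1 + Real.sqrt 5) / 2)⁻¹ : ℝ) : ℂ) * α (k + 2)
        - ((((1 + Real.sqrt 5) / 2)⁻¹ : ℝ) : ℂ) * α (k + 1) - α k = 0) :
    ∀ k : ℕ, α (k + 5) = α k := by
  set c : ℂ := ((((1 + Real.sqrt 5) / 2)⁻¹ : ℝ) : ℂ) with hc
  have hs : Real.sqrt 5 ^ 2 = 5 := Real.sq_sqrt (by norm_num)
  have hpos : (0:ℝ) < 1 + Real.sqrt 5 := by positivity
  have hcr : (((1 + Real.sqrt 5) / 2)⁻¹ : ℝ) ^ 2 = 1 - (((1 + Real.sqrt 5) / 2)⁻¹ : ℝ) := by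
    have hne : (1 + Real.sqrt 5) ≠ 0 := ne_of_gt hpos
    field_simp
    nlinarith [hs]
  have hc2 : c ^ 2 = 1 - c := by
    rw [hc]
    rw [← Complex.ofReal_pow, hcr, Complex.ofReal_sub, Complex.ofReal_one]
  intro k
  have h0 := h k
  have h1 := h (k + 1)
  have h2 := h (k + 2)
  have e1 : α (k + 1 + 3) = α (k + 4) := by ring_nf
  have e2 : α (k + 1 + 2) = α (k + 3) := by ring_nf
  have e3 : α (k + 2 + 3) = α (k + 5) := by ring_nf
  have e4 : α (k + 2 + 2) = α (k + 4) := by ring_nf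
  have e5 : α (k + 2 + 1) = α (k + 3) := by ring_nf
  have e6 : α (k + 1 + 1) = α (k + 2) := by ring_nf
  rw [e1, e2, e6] at h1
  rw [e3, e4, e5] at h2
  linear_combination h2 - c * h1 + (c + c^2) * h0 +
    (-(c + 1) * α (k+2) + c * α (k+1) + α k) * hc2
end

section
/- Let φ = (1+√5)/2 be the golden ratio and let α, β : ℕ → ℂ be sequences satisfying, for all k, the coupled recurrence α(k+2) = φ⁻¹·α(k) + φ^{3/2}·β(k+1) and β(k+2) = φ^{−5/2}·α(k) − φ⁻¹·β(k+1). Then α satisfies the third-order recurrence α(k+3) + φ⁻¹·α(k+2) − φ⁻¹·α(k+1) − α(k) = 0 for all k; consequently α(k+5) = α(k) for all k. -/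
/-- If `α, β` satisfy the coupled recurrence
`α(k+2) = φ⁻¹α(k) + φ^{3/2}β(k+1)`, `β(k+2) = φ^{−5/2}α(k) − φ⁻¹β(k+1)`
(φ the golden ratio), then `α` satisfies the third-order recurrence
`α(k+3) + φ⁻¹α(k+2) − φ⁻¹α(k+1) − α(k) = 0`, and hence is 5-periodic. -/
theorem coupled_recurrence_third_order (α β : ℕ → ℂ)
    (h₁ : ∀ k : ℕ,
      α (k + 2) = ((((1 + Real.sqrt 5) / 2)⁻¹ : ℝ) : ℂ) * α k
        + ((((1 + Real.sqrt 5) / 2) ^ ((3 : ℝ) / 2) : ℝ) : ℂ) * β (k + 1))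
    (h₂ : ∀ k : ℕ,
      β (k + 2) = ((((1 + Real.sqrt 5) / 2) ^ (-(5 : ℝ) / 2) : ℝ) : ℂ) * α k
        - ((((1 + Real.sqrt 5) / 2)⁻¹ : ℝ) : ℂ) * β (k + 1)) :
    (∀ k : ℕ,
      α (k + 3) + ((((1 + Real.sqrt 5) / 2)⁻¹ : ℝ) : ℂ) * α (k + 2)
        - ((((1 + Real.sqrt 5) / 2)⁻¹ : ℝ) : ℂ) * α (k + 1) - α k = 0) ∧
    (∀ k : ℕ, α (k + 5) = α k) := by
  set φ : ℝ := (1 + Real.sqrt 5) / 2 with hφdef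
  have hs5 : (0:ℝ) ≤ Real.sqrt 5 := Real.sqrt_nonneg 5
  have hφpos : 0 < φ := by rw [hφdef]; positivity
  have hφne : φ ≠ 0 := ne_of_gt hφpos
  have hsq : Real.sqrt 5 ^ 2 = 5 := Real.sq_sqrt (by norm_num)
  have hφ2 : φ ^ 2 = φ + 1 := by
    rw [hφdef]; field_simp; nlinarith [hsq]
  -- φ^{3/2} * φ^{-5/2} = φ⁻¹
  have hbd : ((φ ^ ((3:ℝ)/2) : ℝ) : ℂ) * ((φ ^ (-(5:ℝ)/2) : ℝ) : ℂ)
      = ((φ⁻¹ : ℝ) : ℂ) := by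
    rw [← Complex.ofReal_mul, ← Real.rpow_add hφpos]
    norm_num
    rw [Real.rpow_neg_one, Complex.ofReal_inv]
  have hcR : φ⁻¹ ^ 2 + φ⁻¹ = 1 := by
    field_simp
    nlinarith [hφ2]
  have hc : ((φ⁻¹ : ℝ) : ℂ) ^ 2 + ((φ⁻¹ : ℝ) : ℂ) = 1 := by
    exact_mod_cast hcR
  set a : ℂ := ((φ⁻¹ : ℝ) : ℂ)
  have hrec : ∀ k : ℕ, α (k + 3) + a * α (k + 2) - a * α (k + 1) - α k = 0 := by
    intro k
    have e1 := h₁ (k + 1)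
    have e2 := h₂ k
    have e3 := h₁ k
    have e1' : α (k + 3) = a * α (k + 1)
        + ((φ ^ ((3:ℝ)/2) : ℝ) : ℂ) * β (k + 2) := by
      convert e1 using 3 <;> ring
    linear_combination e1' + ((φ ^ ((3:ℝ)/2) : ℝ) : ℂ) * e2 + a * e3
      + α k * hbd + α k * hc
  refine ⟨hrec, fun k => ?_⟩
  have r0 := hrec k
  have r1 := hrec (k + 1)
  have r2 := hrec (k + 2)
  have r1' : α (k + 4) + a * α (k + 3) - a * α (k + 2) - α (k + 1) = 0 := by
    convert r1 using 3 <;> ring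
  have r2' : α (k + 5) + a * α (k + 4) - a * α (k + 3) - α (k + 2) = 0 := by
    convert r2 using 3 <;> ring
  linear_combination r2' - a * r1' + (a + a ^ 2) * r0
    + (-(a + 1) * α (k + 2) + a * α (k + 1) + α k) * hc
end

section
/- Let A be a star ring which is an algebra over ℝ with star(r • x) = r • star x for r ∈ ℝ, x ∈ A. Let φ = (1+√5)/2 be the golden ratio. Let e, f, u ∈ A with e² = e and f² = f, and suppose the 2×2 matrix M = !![φ⁻² • e, u; star u, φ⁻¹ • f] over A is idempotent (M * M = M). Then v := φ^{3/2} • u satisfies v * star v = e and star v * v = f. -/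
/-- If `[[φ⁻²•e, u], [u*, φ⁻¹•f]]` is an idempotent 2×2 matrix over a star ring
(φ the golden ratio, `e, f` idempotents), then `v := φ^{3/2} • u` satisfies
`v v* = e` and `v* v = f`, i.e. `v` is a partial isometry from `f` to `e`. -/
theorem partial_isometry_of_idempotent_block {A : Type*} [Ring A] [StarRing A]
    [Algebra ℝ A] [StarModule ℝ A]
    (e f u : A) (he : e ^ 2 = e) (hf : f ^ 2 = f)
    (hM : (!![((((1 + Real.sqrt 5) / 2) ^ 2)⁻¹ : ℝ) • e, u;
            star u, (((1 + Real.sqrt 5) / 2)⁻¹ : ℝ) • f] : Matrix (Fin 2) (Fin 2) A) *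
        !![((((1 + Real.sqrt 5) / 2) ^ 2)⁻¹ : ℝ) • e, u;
            star u, (((1 + Real.sqrt 5) / 2)⁻¹ : ℝ) • f]
        = !![((((1 + Real.sqrt 5) / 2) ^ 2)⁻¹ : ℝ) • e, u;
            star u, (((1 + Real.sqrt 5) / 2)⁻¹ : ℝ) • f]) :
    ((((1 + Real.sqrt 5) / 2) ^ ((3 : ℝ) / 2) : ℝ) • u) *
        star ((((1 + Real.sqrt 5) / 2) ^ ((3 : ℝ) / 2) : ℝ) • u) = e ∧
    star ((((1 + Real.sqrt 5) / 2) ^ ((3 : ℝ) / 2) : ℝ) • u) *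
        ((((1 + Real.sqrt 5) / 2) ^ ((3 : ℝ) / 2) : ℝ) • u) = f := by
  set φ : ℝ := (1 + Real.sqrt 5) / 2 with hφdef
  have h5 : Real.sqrt 5 ^ 2 = 5 := Real.sq_sqrt (by norm_num)
  have hs : Real.sqrt 5 > 0 := Real.sqrt_pos.mpr (by norm_num)
  have hφpos : φ > 0 := by positivity
  have hφ2 : φ ^ 2 = φ + 1 := by rw [hφdef]; nlinarith [h5]
  have hee : e * e = e := by rw [← pow_two]; exact he
  have hff : f * f = f := by rw [← pow_two]; exact hf
  have h00 := congrFun (congrFun hM 0) 0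
  have h11 := congrFun (congrFun hM 1) 1
  simp only [Matrix.mul_apply, Fin.sum_univ_two, Matrix.cons_val', Matrix.cons_val_zero,
    Matrix.cons_val_one, Matrix.head_cons, Matrix.empty_val', Matrix.cons_val_fin_one,
    Matrix.head_fin_const] at h00 h11
  have huu : u * star u = ((φ ^ 2)⁻¹ - ((φ ^ 2)⁻¹) ^ 2) • e := by
    have h : ((φ ^ 2)⁻¹ * (φ ^ 2)⁻¹) • (e * e) + u * star u = (φ ^ 2)⁻¹ • e := by
      rw [← smul_mul_smul_comm]; exact h00
    rw [hee, ← pow_two] at h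
    rw [sub_smul]; exact eq_sub_of_add_eq' h
  have hvv : star u * u = (φ⁻¹ - (φ⁻¹) ^ 2) • f := by
    have h : star u * u + (φ⁻¹ * φ⁻¹) • (f * f) = φ⁻¹ • f := by
      rw [← smul_mul_smul_comm]; exact h11
    rw [hff, ← pow_two] at h
    rw [sub_smul]; exact eq_sub_of_add_eq h
  have hc : (φ ^ ((3 : ℝ) / 2)) * (φ ^ ((3 : ℝ) / 2)) = φ ^ 3 := by
    rw [← Real.rpow_add hφpos]
    norm_num
  have hφne : φ ≠ 0 := ne_of_gt hφpos
  constructor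
  · rw [star_smul, star_trivial, smul_mul_smul_comm, hc, huu, smul_smul]
    have h2 : (φ ^ 2)⁻¹ = 2 - φ := by
      have hm : (2 - φ) * φ ^ 2 = 1 := by linear_combination (1 - φ) * hφ2
      exact (eq_inv_of_mul_eq_one_left hm).symm
    have h1 : φ ^ 3 * ((φ ^ 2)⁻¹ - ((φ ^ 2)⁻¹) ^ 2) = 1 := by
      rw [h2]; linear_combination (-φ ^ 3 + 2 * φ ^ 2 - φ + 1) * hφ2
    rw [h1, one_smul]
  · rw [star_smul, star_trivial, smul_mul_smul_comm, hc, hvv, smul_smul]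
    have h2 : φ⁻¹ = φ - 1 := by
      have hm : (φ - 1) * φ = 1 := by linear_combination hφ2
      exact (eq_inv_of_mul_eq_one_left hm).symm
    have h1 : φ ^ 3 * (φ⁻¹ - (φ⁻¹) ^ 2) = 1 := by
      rw [h2]; linear_combination (-φ ^ 3 + 2 * φ ^ 2 - φ + 1) * hφ2
    rw [h1, one_smul]
end

section
/- Let V be a type, G : SimpleGraph V, and c : V → Fin 3 a coloring such that every edge of G joins a vertex of color 0 to a vertex of color 1 or a vertex of color 1 to a vertex of color 2, and such that every vertex of color 1 has at least one neighbor of color 0 and at least one neighbor of color 2. Let G' be the simple graph on the subtype {v : V // c v ≠ 1} in which two vertices u, w are adjacent if and only if their colors are 0 and 2 in some order and there exists m : V with c m = 1, G.Adj u m and G.Adj m w. If G is connected, then G' is connected. -/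
private lemma fin3_ne_one {x : Fin 3} (h : x ≠ 1) : x = 0 ∨ x = 2 := by
  revert h; revert x; decide

/-- If a connected graph is coloured by three colours `0, 1, 2` so that every edge joins
colours `0–1` or `1–2`, and every vertex of colour `1` has neighbours of both colours
`0` and `2`, then the graph on the vertices of colours `0, 2`, where two such vertices
are adjacent iff they have opposite outer colours and a common neighbour of colour `1`,
is connected. -/
theorem induced_bipartite_connected {V : Type*} (G : SimpleGraph V) (c : V → Fin 3)
    (hedge : ∀ ⦃u w : V⦄, G.Adj u w →
      (c u = 0 ∧ c w = 1) ∨ (c u = 1 ∧ c w = 0) ∨ (c u = 1 ∧ c w = 2) ∨ (c u = 2 ∧ c w = 1))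
    (hmid : ∀ v : V, c v = 1 →
      (∃ u, G.Adj v u ∧ c u = 0) ∧ (∃ w, G.Adj v w ∧ c w = 2))
    (G' : SimpleGraph {v : V // c v ≠ 1})
    (hG' : ∀ u w : {v : V // c v ≠ 1}, G'.Adj u w ↔
      (((c u.1 = 0 ∧ c w.1 = 2) ∨ (c u.1 = 2 ∧ c w.1 = 0)) ∧
        ∃ m : V, c m = 1 ∧ G.Adj u.1 m ∧ G.Adj m w.1))
    (hG : G.Connected) : G'.Connected := by
  -- adjacency facts
  have hadj1 : ∀ {u m : V}, G.Adj u m → c u ≠ 1 → c m = 1 := by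
    intro u m h hu
    rcases hedge h with ⟨_, h1⟩ | ⟨h1, _⟩ | ⟨h1, _⟩ | ⟨_, h1⟩ <;> first | exact h1 | exact absurd h1 hu
  have hadj2 : ∀ {m x : V}, G.Adj m x → c m = 1 → c x ≠ 1 := by
    intro m x h hm
    rcases hedge h with ⟨h1, _⟩ | ⟨_, h1⟩ | ⟨_, h1⟩ | ⟨h1, _⟩ <;> simp_all
  -- building G' adjacency from a common neighbour when colours differ
  have key : ∀ n (a b : V) (ha : c a ≠ 1) (hb : c b ≠ 1) (p : G.Walk a b),
      p.length ≤ n → G'.Reachable ⟨a, ha⟩ ⟨b, hb⟩ := by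
    intro n
    induction n with
    | zero =>
      intro a b ha hb p hp
      have : a = b := p.eq_of_length_eq_zero (Nat.le_zero.mp hp)
      subst this
      exact SimpleGraph.Reachable.refl _
    | succ n ih =>
      intro a b ha hb p hp
      cases p with
      | nil => exact SimpleGraph.Reachable.refl _
      | @cons _ m _ ham q =>
        have hm : c m = 1 := hadj1 ham ha
        cases q with
        | nil => exact absurd hm hb
        | @cons _ x _ hmx r =>
          have hx : c x ≠ 1 := hadj2 hmx hm
          -- reach from a to x in G'
          have step : G'.Reachable ⟨a, ha⟩ ⟨x, hx⟩ := by
            rcases fin3_ne_one ha with ha0 | ha2 <;> rcases fin3_ne_one hx with hx0 | hx2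
            · -- both 0: use a colour-2 neighbour of m
              obtain ⟨w2, hmw2, hw2⟩ := (hmid m hm).2
              have hw2' : c w2 ≠ 1 := by rw [hw2]; decide
              have e1 : G'.Adj ⟨a, ha⟩ ⟨w2, hw2'⟩ :=
                (hG' _ _).mpr ⟨Or.inl ⟨ha0, hw2⟩, m, hm, ham, hmw2⟩
              have e2 : G'.Adj ⟨w2, hw2'⟩ ⟨x, hx⟩ :=
                (hG' _ _).mpr ⟨Or.inr ⟨hw2, hx0⟩, m, hm, hmw2.symm, hmx⟩
              exact e1.reachable.trans e2.reachable
            · exact ((hG' _ _).mpr ⟨Or.inl ⟨ha0, hx2⟩, m, hm, ham, hmx⟩).reachable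
            · exact ((hG' _ _).mpr ⟨Or.inr ⟨ha2, hx0⟩, m, hm, ham, hmx⟩).reachable
            · -- both 2: use a colour-0 neighbour of m
              obtain ⟨w0, hmw0, hw0⟩ := (hmid m hm).1
              have hw0' : c w0 ≠ 1 := by rw [hw0]; decide
              have e1 : G'.Adj ⟨a, ha⟩ ⟨w0, hw0'⟩ :=
                (hG' _ _).mpr ⟨Or.inr ⟨ha2, hw0⟩, m, hm, ham, hmw0⟩
              have e2 : G'.Adj ⟨w0, hw0'⟩ ⟨x, hx⟩ :=
                (hG' _ _).mpr ⟨Or.inl ⟨hw0, hx2⟩, m, hm, hmw0.symm, hmx⟩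
              exact e1.reachable.trans e2.reachable
          have hr : r.length ≤ n := by
            simp [SimpleGraph.Walk.length_cons] at hp
            omega
          exact step.trans (ih x b hx hb r hr)
  rw [SimpleGraph.connected_iff]
  refine ⟨?_, ?_⟩
  · intro ⟨a, ha⟩ ⟨b, hb⟩
    obtain ⟨p⟩ := hG.preconnected a b
    exact key p.length a b ha hb p le_rfl
  · obtain ⟨v⟩ := hG.nonempty
    by_cases hv : c v = 1
    · obtain ⟨u, _, hu⟩ := (hmid v hv).1
      exact ⟨⟨u, by rw [hu]; decide⟩⟩
    · exact ⟨⟨v, hv⟩⟩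
end
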